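/- In the pushback (final pullback complement) D = (K + L̄) +ₑ K̃ of a graph morphism l : K → L along a graph mono m : L → G (G = (L + L̄) +ₑ L̃), the induced map on linking edges is a bijection K̃(n_D, p_D) ≅ L̃(l₁(n_D), l₁(p_D)) for all nodes n_D, p_D of D. -/

import Mathlib

universe u

structure MultiGraph : Type (u + 1) where
  N : Type u
  E : Type u
  src : E → N
  tgt : E → N

@[ext]
structure GraphHom (X Y : MultiGraph.{u}) where
  fN : X.N → Y.N
  fE : X.E → Y.E
  hsrc : ∀ e, Y.src (fE e) = fN (X.src e)
  htgt : ∀ e, Y.tgt (fE e) = fN (X.tgt e)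

def GraphHom.id (X : MultiGraph.{u}) : GraphHom X X :=
  ⟨_root_.id, _root_.id, fun _ => rfl, fun _ => rfl⟩

/-- `g.comp f` is the composite `g ∘ f`. -/
def GraphHom.comp {X Y Z : MultiGraph.{u}} (g : GraphHom Y Z) (f : GraphHom X Y) :
    GraphHom X Z :=
  ⟨g.fN ∘ f.fN, g.fE ∘ f.fE,
    fun e => by simp [Function.comp, g.hsrc, f.hsrc],
    fun e => by simp [Function.comp, g.htgt, f.htgt]⟩

section
variable (X Xbar : MultiGraph.{u}) (Xt : Type u) (xs xt : Xt → X.N ⊕ Xbar.N)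

/-- The graph `(X + Xbar) +ₑ Xt` built from decomposition data. -/
def sumGraph : MultiGraph.{u} where
  N := X.N ⊕ Xbar.N
  E := X.E ⊕ Xbar.E ⊕ Xt
  src := Sum.elim (Sum.inl ∘ X.src) (Sum.elim (Sum.inr ∘ Xbar.src) xs)
  tgt := Sum.elim (Sum.inl ∘ X.tgt) (Sum.elim (Sum.inr ∘ Xbar.tgt) xt)

/-- The canonical inclusion (a monomorphism) `X → (X + Xbar) +ₑ Xt`. -/
def sumIncl : GraphHom X (sumGraph X Xbar Xt xs xt) :=
  ⟨Sum.inl, Sum.inl, fun _ => rfl, fun _ => rfl⟩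

end

section
variable (K L Lbar : MultiGraph.{u}) (l : GraphHom K L)
variable (Lt : Type u) (ls lt : Lt → L.N ⊕ Lbar.N)
variable (Kbar : MultiGraph.{u}) (lbar : GraphHom Kbar Lbar)
variable (Kt : Type u) (ks kt : Kt → K.N ⊕ Kbar.N) (ltil : Kt → Lt)
variable (hls : ∀ e, ls (ltil e) = Sum.map l.fN lbar.fN (ks e))
variable (hlt : ∀ e, lt (ltil e) = Sum.map l.fN lbar.fN (kt e))

/-- The morphism `l₁ = (l + lbar) +ₑ l̃ : (K + Kbar) +ₑ Kt → (L + Lbar) +ₑ Lt`. -/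
def pbcMor : GraphHom (sumGraph K Kbar Kt ks kt) (sumGraph L Lbar Lt ls lt) where
  fN := Sum.map l.fN lbar.fN
  fE := Sum.map l.fE (Sum.map lbar.fE ltil)
  hsrc := by rintro (e | e | e) <;> simp [sumGraph, l.hsrc, lbar.hsrc, hls]
  htgt := by rintro (e | e | e) <;> simp [sumGraph, l.htgt, lbar.htgt, hlt]

end

section
variable (K L Lbar : MultiGraph.{u}) (l : GraphHom K L)
variable (Lt : Type u) (ls lt : Lt → L.N ⊕ Lbar.N)

/-- The linking edges of the pushback `D = (K + Lbar) +ₑ Kt`: one edge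
`(e, n, p) : n → p` for every pair of nodes `n, p` of `D` and every linking
edge `e : l₁ n → l₁ p` in `Lt`. -/
def pbKt : Type u :=
  {x : ((K.N ⊕ Lbar.N) × (K.N ⊕ Lbar.N)) × Lt //
    ls x.2 = Sum.map l.fN _root_.id x.1.1 ∧
    lt x.2 = Sum.map l.fN _root_.id x.1.2}

/-- The pushback (final pullback complement) graph `D = (K + Lbar) +ₑ Kt`. -/
def pbD : MultiGraph.{u} where
  N := K.N ⊕ Lbar.N
  E := K.E ⊕ Lbar.E ⊕ pbKt K L Lbar l Lt ls lt
  src := Sum.elim (Sum.inl ∘ K.src) (Sum.elim (Sum.inr ∘ Lbar.src) (fun x => x.1.1.1))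
  tgt := Sum.elim (Sum.inl ∘ K.tgt) (Sum.elim (Sum.inr ∘ Lbar.tgt) (fun x => x.1.1.2))

/-- The canonical inclusion `d : K → D`. -/
def pbd : GraphHom K (pbD K L Lbar l Lt ls lt) :=
  ⟨Sum.inl, Sum.inl, fun _ => rfl, fun _ => rfl⟩

/-- The morphism `l₁ = (l + id) +ₑ l̃ : D → G`, `l̃ (e, n, p) = e`. -/
def pbl1 : GraphHom (pbD K L Lbar l Lt ls lt) (sumGraph L Lbar Lt ls lt) where
  fN := Sum.map l.fN _root_.id
  fE := Sum.map l.fE (Sum.map _root_.id (fun x => x.1.2))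
  hsrc := by
    rintro (e | e | e) <;>
      simp [pbD, sumGraph, l.hsrc]
    exact e.2.1
  htgt := by
    rintro (e | e | e) <;>
      simp [pbD, sumGraph, l.htgt]
    exact e.2.2

end

def Equiv.subtypeProdFstFiber {α β : Type*} (P : α → β → Prop) (a : α) :
    {x : {p : α × β // P p.1 p.2} // x.1.1 = a} ≃ {b // P a b} where
  toFun x := ⟨x.1.1.2, by obtain ⟨⟨_, h⟩, rfl⟩ := x; exact h⟩
  invFun b := ⟨⟨(a, b.1), b.2⟩, rfl⟩
  left_inv := by rintro ⟨⟨⟨_, _⟩, _⟩, rfl⟩; rfl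
  right_inv _ := rfl

theorem graph_pushback_linking_edges (K L Lbar : MultiGraph.{u})
    (l : GraphHom K L) (Lt : Type u) (ls lt : Lt → L.N ⊕ Lbar.N)
    (nD pD : (pbD K L Lbar l Lt ls lt).N) :
    Nonempty
      ({e : pbKt K L Lbar l Lt ls lt // e.1.1.1 = nD ∧ e.1.1.2 = pD} ≃
       {e : Lt // ls e = Sum.map l.fN _root_.id nD ∧
                  lt e = Sum.map l.fN _root_.id pD}) := by
  -- `pbKt` is definitionally `{x // P x.1 x.2}`.
  let P (q : (K.N ⊕ Lbar.N) × (K.N ⊕ Lbar.N)) (e : Lt) : Prop :=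
    ls e = Sum.map l.fN _root_.id q.1 ∧ lt e = Sum.map l.fN _root_.id q.2
  exact ⟨(Equiv.subtypeEquivRight fun _ => Prod.ext_iff.symm).trans
    (Equiv.subtypeProdFstFiber P (nD, pD))⟩
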